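/- Let n ≥ 2, p ≥ 2, and τ = σ_1 σ_2 ⋯ σ_{n−1} in B_n. Partition the np × np matrix Φ^L_{τ^{(p)}} over 𝒜_{np} into p × p blocks Ψ_{ij}, 1 ≤ i, j ≤ n. Then: (a) Ψ_{i,i+1} = I_p for 1 ≤ i ≤ n−1 and Ψ_{ij} = 0 whenever i < n, j > 1 and j ≠ i+1; (b) Ψ_{n1} = I_p; (c) Ψ_{nj} = 0 for j > 1; moreover the (1,p) entry of Ψ_{11}, i.e. (Φ^L_{τ^{(p)}})_{1,p}, equals −a_{p+1,p}; and (d) for γ̄ = σ_1 σ_2 ⋯ σ_{p−1} regarded as a word in the generators of B_{np}, the p-th row of Φ^L_{γ̄} is the standard basis row vector e_1, i.e. (Φ^L_{γ̄})_{p,1} = 1 and (Φ^L_{γ̄})_{p,j} = 0 for j > 1. -/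

import Mathlib

open scoped TensorProduct

/-- Generator index set for the algebra `𝒜ₙ`: pairs `(i,j)` with `1 ≤ i,j ≤ n`, `i ≠ j`. -/
abbrev Idx (n : ℕ) : Type := {q : ℕ × ℕ // q.1 ≠ q.2 ∧ 1 ≤ q.1 ∧ q.1 ≤ n ∧ 1 ≤ q.2 ∧ q.2 ≤ n}

/-- `𝒜ₙ`, the free noncommutative unital `ℤ`-algebra on the generators `a_{ij}`. -/
abbrev FA (n : ℕ) : Type := FreeAlgebra ℤ (Idx n)

/-- The generator `a_{ij}` when the indices are in range (`1 ≤ i,j ≤ n`, `i ≠ j`); `0` otherwise. -/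
noncomputable def gen (n i j : ℕ) : FA n :=
  if h : i ≠ j ∧ 1 ≤ i ∧ i ≤ n ∧ 1 ≤ j ∧ j ≤ n then FreeAlgebra.ι ℤ (⟨(i, j), h⟩ : Idx n) else 0

/-- Image of the generator `a_{ij}` under `φ_{σ_k}`. -/
noncomputable def phiGenImg (n k i j : ℕ) : FA n :=
  if i = k then
    (if j = k + 1 then -gen n (k+1) k
     else gen n (k+1) j - gen n (k+1) k * gen n k j)
  else if i = k + 1 then
    (if j = k then -gen n k (k+1) else gen n k j)
  else
    if j = k then gen n i (k+1) - gen n i k * gen n k (k+1)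
    else if j = k + 1 then gen n i k
    else gen n i j

/-- Image of the generator `a_{ij}` under `φ_{σ_k}⁻¹ = φ_{σ_k⁻¹}`. -/
noncomputable def phiInvGenImg (n k i j : ℕ) : FA n :=
  if i = k + 1 then
    (if j = k then -gen n k (k+1)
     else gen n k j - gen n k (k+1) * gen n (k+1) j)
  else if i = k then
    (if j = k + 1 then -gen n (k+1) k else gen n (k+1) j)
  else
    if j = k + 1 then gen n i k - gen n i (k+1) * gen n (k+1) k
    else if j = k then gen n i (k+1)
    else gen n i j

/-- `φ_{σ_k}` for the letter `(k, true)` and `φ_{σ_k⁻¹}` for the letter `(k, false)`. -/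
noncomputable def phiLetter (n : ℕ) (l : ℕ × Bool) : FA n →ₐ[ℤ] FA n :=
  FreeAlgebra.lift ℤ fun g : Idx n =>
    if l.2 then phiGenImg n l.1 g.val.1 g.val.2 else phiInvGenImg n l.1 g.val.1 g.val.2

/-- `φ_β` for a word `β` in the letters `σ_k^{±1}`, with `φ_{β₁β₂} = φ_{β₁} ∘ φ_{β₂}`. -/
noncomputable def phiWord (n : ℕ) (w : List (ℕ × Bool)) : FA n →ₐ[ℤ] FA n :=
  w.foldr (fun l f => (phiLetter n l).comp f) (AlgHom.id ℤ (FA n))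

/-- `β` is a word in the generators `σ_1^{±1}, …, σ_{n−1}^{±1}` of the braid group `B_n`. -/
def WordIn (n : ℕ) (w : List (ℕ × Bool)) : Prop := ∀ l ∈ w, 1 ≤ l.1 ∧ l.1 + 1 ≤ n

/-- The natural inclusion `𝒜ₙ → 𝒜ₙ₊₁`. -/
noncomputable def incl (n : ℕ) : FA n →ₐ[ℤ] FA (n+1) :=
  FreeAlgebra.lift ℤ fun g : Idx n => gen (n+1) g.val.1 g.val.2

/-- `M` (a matrix recorded as a function `ℕ → ℕ → 𝒜ₙ`, supported on `[1,n] × [1,n]`)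
is the matrix `Φ^L_β`:  `φ*_β(a_{i,n+1}) = ∑_j M_{ij} a_{j,n+1}`. -/
def IsPhiL (n : ℕ) (w : List (ℕ × Bool)) (M : ℕ → ℕ → FA n) : Prop :=
  (∀ i j, i ∉ Finset.Icc 1 n ∨ j ∉ Finset.Icc 1 n → M i j = 0) ∧
  ∀ i ∈ Finset.Icc 1 n,
    phiWord (n+1) w (gen (n+1) i (n+1)) =
      ∑ j ∈ Finset.Icc 1 n, incl n (M i j) * gen (n+1) j (n+1)

/-- `M` is the matrix `Φ^R_β`:  `φ*_β(a_{n+1,i}) = ∑_j a_{n+1,j} M_{ji}`. -/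
def IsPhiR (n : ℕ) (w : List (ℕ × Bool)) (M : ℕ → ℕ → FA n) : Prop :=
  (∀ i j, i ∉ Finset.Icc 1 n ∨ j ∉ Finset.Icc 1 n → M i j = 0) ∧
  ∀ i ∈ Finset.Icc 1 n,
    phiWord (n+1) w (gen (n+1) (n+1) i) =
      ∑ j ∈ Finset.Icc 1 n, gen (n+1) (n+1) j * incl n (M j i)

/-- The permutation (of `ℕ`, via 1-based strand labels) determined by a braid word,
with `perm (w₁ ++ w₂) = perm w₁ * perm w₂`. -/
def permWord (w : List (ℕ × Bool)) : Equiv.Perm ℕ :=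
  w.foldr (fun l f => Equiv.swap l.1 (l.1 + 1) * f) 1

/-- The writhe (exponent sum) of a braid word. -/
def writhe (w : List (ℕ × Bool)) : ℤ :=
  (w.map fun l => if l.2 then (1 : ℤ) else -1).sum

/-- Conjugation, as an algebra map to the opposite algebra. -/
noncomputable def conjHom (n : ℕ) : FA n →ₐ[ℤ] (FA n)ᵐᵒᵖ :=
  FreeAlgebra.lift ℤ fun g : Idx n => MulOpposite.op (gen n g.val.2 g.val.1)

/-- Conjugation `x ↦ x̄`: the `ℤ`-linear anti-automorphism with `a_{ij} ↦ a_{ji}`. -/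
noncomputable def conj (n : ℕ) (x : FA n) : FA n := (conjHom n x).unop

/-- Conjugation as a `ℤ`-linear map. -/
noncomputable def conjLin (n : ℕ) : FA n →ₗ[ℤ] FA n :=
  (MulOpposite.opLinearEquiv ℤ).symm.toLinearMap ∘ₗ (conjHom n).toLinearMap

/-- The word `τ_{a,p} = σ_a σ_{a+1} ⋯ σ_{a+p−1}`. -/
def tauWord (a p : ℕ) : List (ℕ × Bool) := (List.range p).map fun t => (a + t, true)

/-- The word `κ_{a,l} = τ_{a+l−1,p} τ_{a+l−2,p} ⋯ τ_{a,p}`. -/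
def kappaWord (a l p : ℕ) : List (ℕ × Bool) :=
  (((List.range l).reverse).map fun t => tauWord (a + t) p).flatten

/-- The inverse of a braid word. -/
def invWord (w : List (ℕ × Bool)) : List (ℕ × Bool) := w.reverse.map fun l => (l.1, !l.2)

/-- The `p`-cable `α^{(p)}` of a braid word `α` (each strand replaced by `p` parallel strands):
substitute `σ_m ↦ κ_{(m−1)p+1,p}` and `σ_m⁻¹ ↦ κ_{(m−1)p+1,p}⁻¹`. -/
def cable (p : ℕ) (w : List (ℕ × Bool)) : List (ℕ × Bool) :=
  (w.map fun l =>
    if l.2 then kappaWord ((l.1 - 1) * p + 1) p p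
    else invWord (kappaWord ((l.1 - 1) * p + 1) p p)).flatten

/-- The product `a_{x₁x₂} a_{x₂x₃} ⋯ a_{x_{m-1}x_m}` along a list `[x₁, …, x_m]`
(`1` for lists of length `≤ 1`). -/
noncomputable def pathFactors (n : ℕ) : List ℕ → FA n
  | x :: y :: rest => gen n x y * pathFactors n (y :: rest)
  | _ => 1

/-- `A(i,j,X) = Σ_{Y ⊆ X} (−1)^{|Y|} a_{i y₁} a_{y₁ y₂} ⋯ a_{y_k j}` (ascending order on `Y`). -/
noncomputable def Aexp (n i j : ℕ) (X : Finset ℕ) : FA n :=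
  ∑ Y ∈ X.powerset, ((-1 : ℤ) ^ Y.card) • pathFactors n (i :: (Y.sort (· ≤ ·) ++ [j]))

/-- `A'(i,j,X) = Σ_{Y ⊆ X} (−1)^{|Y|} a_{i y_k} a_{y_k y_{k−1}} ⋯ a_{y₁ j}` (descending order). -/
noncomputable def A'exp (n i j : ℕ) (X : Finset ℕ) : FA n :=
  ∑ Y ∈ X.powerset, ((-1 : ℤ) ^ Y.card) • pathFactors n (i :: ((Y.sort (· ≤ ·)).reverse ++ [j]))

/-- `B'(i,j,X) = Σ_{Y ⊆ X, min Y ≠ j} c_Y a_{i y_k} ⋯ a_{y₁ j}`, where `c_Y = (−1)^{|Y|+1}` if all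
elements of `Y` exceed `j` (including `Y = ∅`), and `c_Y = (−1)^{|Y|}` otherwise. -/
noncomputable def B'exp (n i j : ℕ) (X : Finset ℕ) : FA n :=
  ∑ Y ∈ X.powerset.filter (fun Y => Y.min ≠ (j : WithTop ℕ)),
    (if ∀ y ∈ Y, j < y then ((-1 : ℤ) ^ (Y.card + 1)) else ((-1 : ℤ) ^ Y.card)) •
      pathFactors n (i :: ((Y.sort (· ≤ ·)).reverse ++ [j]))

/-- For `i = (q_i − 1)p + r_i` with `1 ≤ r_i ≤ p`: the quotient `q_i`. -/
def qIdx (p i : ℕ) : ℕ := (i - 1) / p + 1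

/-- For `i = (q_i − 1)p + r_i` with `1 ≤ r_i ≤ p`: the remainder `r_i`. -/
def rIdx (p i : ℕ) : ℕ := (i - 1) % p + 1

/-- The homomorphism `ψ : 𝒜_{kp} → 𝒜_k ⊗ 𝒜_p`. -/
noncomputable def psi (k p : ℕ) : FA (k * p) →ₐ[ℤ]
    @TensorProduct ℤ _ (FA k) (FA p) _ _ Algebra.toModule Algebra.toModule :=
  FreeAlgebra.lift ℤ fun g : Idx (k * p) =>
    if qIdx p g.val.1 = qIdx p g.val.2 then
      (1 : FA k) ⊗ₜ[ℤ] gen p (rIdx p g.val.1) (rIdx p g.val.2)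
    else if rIdx p g.val.1 = rIdx p g.val.2 then
      gen k (qIdx p g.val.1) (qIdx p g.val.2) ⊗ₜ[ℤ] (1 : FA p)
    else if (qIdx p g.val.1 < qIdx p g.val.2 ∧ rIdx p g.val.2 < rIdx p g.val.1) ∨
            (qIdx p g.val.2 < qIdx p g.val.1 ∧ rIdx p g.val.1 < rIdx p g.val.2) then 0
    else gen k (qIdx p g.val.1) (qIdx p g.val.2) ⊗ₜ[ℤ] gen p (rIdx p g.val.1) (rIdx p g.val.2)

/-- `ψ*(x · a_{i,*}) = ψ(x) · (a_{q_i,*} ⊗ a_{r_i,*})`, the image of the element `x · a_{i,*}`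
of `𝒜_{kp}^L` under `ψ* : 𝒜_{kp}^L → 𝒜_k^L ⊗ 𝒜_p^L`, the target realized inside
`𝒜_{k+1} ⊗ 𝒜_{p+1}`. -/
noncomputable def psiStarElt (k p : ℕ) (x : FA (k * p)) (i : ℕ) :
    @TensorProduct ℤ _ (FA (k+1)) (FA (p+1)) _ _ Algebra.toModule Algebra.toModule :=
  (Algebra.TensorProduct.map (incl k) (incl p)) (psi k p x) *
    (@TensorProduct.tmul ℤ _ _ _ _ _ Algebra.toModule Algebra.toModule
      (gen (k+1) (qIdx p i) (k+1)) (gen (p+1) (rIdx p i) (p+1)))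

/-- The `(i,j)` entry of `Δ(β) = diag[(−1)^{w(β)}, 1, …, 1]` (1-based indices). -/
noncomputable def deltaEnt (w : List (ℕ × Bool)) (i j : ℕ) : ℂ :=
  if i = j then (if i = 1 then (-1 : ℂ) ^ writhe w else 1) else 0

/-!
Write `e_i = a_{i,N+1}`. Row `i` of `Φ^L_β` lists the left coefficients of `φ*_β(e_i)` in the
`e_j`, and for `β ∈ B_N` the map `φ*_β` commutes with the inclusion `𝒜_N → 𝒜_{N+1}`, so rows are
computed by following the `e_i` through the letters of `β`. The braid `τ_{a,m}` sends
`e_{a+m} ↦ e_a` and `e_{a+t} ↦ e_{a+t+1} − a_{a+t+1,a} e_a` for `t < m`; in particular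
`γ̄ = τ_{1,p−1}` sends `e_p ↦ e_1`. Composing `p` of them, `κ_{a,p}` sends the block
`e_{a+p}, …, e_{a+2p−1}` back to `e_a, …, e_{a+p−1}`, and `e_{a+t}` to `e_{a+p+t}` plus a left
combination of `e_a, …, e_{a+p−1}` whose last coefficient is `−a_{a+p+t,a+p−1}`. Hence the cable
`τ^{(p)} = κ_{1,p} κ_{p+1,p} ⋯ κ_{(n−2)p+1,p}` sends block `b < n` to block `b+1` plus a left
combination of block `1` (the coefficient of `e_p` in the image of `e_1` being `−a_{p+1,p}`), and
sends block `n` to block `1`.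
-/

lemma gen_eq_ι {n i j : ℕ} (h : i ≠ j ∧ 1 ≤ i ∧ i ≤ n ∧ 1 ≤ j ∧ j ≤ n) :
    gen n i j = FreeAlgebra.ι ℤ (⟨(i, j), h⟩ : Idx n) :=
  dif_pos h

lemma phiLetter_gen (n : ℕ) (l : ℕ × Bool) {i j : ℕ}
    (h : i ≠ j ∧ 1 ≤ i ∧ i ≤ n ∧ 1 ≤ j ∧ j ≤ n) :
    phiLetter n l (gen n i j) =
      if l.2 then phiGenImg n l.1 i j else phiInvGenImg n l.1 i j := by
  rw [gen_eq_ι h, phiLetter, FreeAlgebra.lift_ι_apply]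

lemma incl_gen {n i j : ℕ} (hi : i ≤ n) (hj : j ≤ n) : incl n (gen n i j) = gen (n+1) i j := by
  by_cases h : i ≠ j ∧ 1 ≤ i ∧ i ≤ n ∧ 1 ≤ j ∧ j ≤ n
  · rw [gen_eq_ι h, incl, FreeAlgebra.lift_ι_apply]
  · rw [gen, dif_neg h, map_zero, gen, dif_neg (by omega)]

lemma incl_phiGenImg {n k i j : ℕ} (hk : k + 1 ≤ n) (hi : i ≤ n) (hj : j ≤ n) :
    incl n (phiGenImg n k i j) = phiGenImg (n+1) k i j := by
  unfold phiGenImg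
  split_ifs <;> simp [incl_gen, hi, hj, hk, Nat.le_of_succ_le hk]

lemma incl_phiInvGenImg {n k i j : ℕ} (hk : k + 1 ≤ n) (hi : i ≤ n) (hj : j ≤ n) :
    incl n (phiInvGenImg n k i j) = phiInvGenImg (n+1) k i j := by
  unfold phiInvGenImg
  split_ifs <;> simp [incl_gen, hi, hj, hk, Nat.le_of_succ_le hk]

lemma phiLetter_comp_incl {n : ℕ} {l : ℕ × Bool} (hl : l.1 + 1 ≤ n) :
    (phiLetter (n+1) l).comp (incl n) = (incl n).comp (phiLetter n l) := by
  ext ⟨⟨i, j⟩, h⟩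
  change i ≠ j ∧ 1 ≤ i ∧ i ≤ n ∧ 1 ≤ j ∧ j ≤ n at h
  have h' : i ≠ j ∧ 1 ≤ i ∧ i ≤ n + 1 ∧ 1 ≤ j ∧ j ≤ n + 1 := by omega
  change phiLetter (n+1) l (incl n (FreeAlgebra.ι ℤ _)) = incl n (phiLetter n l (FreeAlgebra.ι ℤ _))
  rw [← gen_eq_ι h, incl_gen h.2.2.1 h.2.2.2.2, phiLetter_gen _ _ h, phiLetter_gen _ _ h']
  split_ifs
  · exact (incl_phiGenImg hl h.2.2.1 h.2.2.2.2).symm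
  · exact (incl_phiInvGenImg hl h.2.2.1 h.2.2.2.2).symm

lemma phiWord_cons (n : ℕ) (l : ℕ × Bool) (w : List (ℕ × Bool)) :
    phiWord n (l :: w) = (phiLetter n l).comp (phiWord n w) :=
  rfl

lemma phiWord_append (n : ℕ) (w₁ w₂ : List (ℕ × Bool)) :
    phiWord n (w₁ ++ w₂) = (phiWord n w₁).comp (phiWord n w₂) := by
  induction w₁ with
  | nil => rfl
  | cons l w ih => rw [List.cons_append, phiWord_cons, phiWord_cons, ih, AlgHom.comp_assoc]

lemma phiWord_append_singleton_apply (n : ℕ) (w : List (ℕ × Bool)) (l : ℕ × Bool) (x : FA n) :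
    phiWord n (w ++ [l]) x = phiWord n w (phiLetter n l x) := by
  rw [phiWord_append]
  rfl

lemma phiWord_incl {n : ℕ} {w : List (ℕ × Bool)} (hw : WordIn n w) (x : FA n) :
    phiWord (n+1) w (incl n x) = incl n (phiWord n w x) := by
  induction w with
  | nil => rfl
  | cons l w ih =>
    rw [phiWord_cons, phiWord_cons, AlgHom.comp_apply, AlgHom.comp_apply,
      ih fun m hm => hw m (List.mem_cons_of_mem l hm)]
    exact congrArg (· (phiWord n w x)) (phiLetter_comp_incl (hw l List.mem_cons_self).2)

noncomputable def genLast (N i : ℕ) : FA (N+1) := gen (N+1) i (N+1)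

lemma phiLetter_genLast {N k i : ℕ} (hk : k + 1 ≤ N) (hi : 1 ≤ i) (hiN : i ≤ N) :
    phiLetter (N+1) (k, true) (genLast N i) =
      if i = k then genLast N (k+1) - gen (N+1) (k+1) k * genLast N k
      else if i = k + 1 then genLast N k else genLast N i := by
  rw [genLast, phiLetter_gen (N+1) (k, true) (by omega : i ≠ N + 1 ∧ 1 ≤ i ∧ i ≤ N + 1 ∧ _),
    if_pos rfl]
  unfold phiGenImg genLast
  split_ifs <;> first | rfl | omega

section tauWord

variable {N a m : ℕ}

lemma tauWord_succ (a m : ℕ) : tauWord a (m+1) = tauWord a m ++ [(a+m, true)] := by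
  simp [tauWord, List.range_succ]

lemma wordIn_tauWord (ha : 1 ≤ a) (hm : a + m ≤ N) : WordIn N (tauWord a m) := by
  intro l hl
  obtain ⟨t, ht, rfl⟩ := List.mem_map.1 hl
  simp only [List.mem_range] at ht
  omega

lemma phiWord_tauWord_gen {i : ℕ} (hm : a + m ≤ N) (hi : a + m < i) (hiN : i ≤ N + 1) :
    phiWord (N+1) (tauWord a m) (gen (N+1) i (a+m)) = gen (N+1) i a := by
  induction m with
  | zero => rfl
  | succ m ih =>
    have hstep : phiLetter (N+1) (a+m, true) (gen (N+1) i (a+(m+1))) = gen (N+1) i (a+m) := by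
      rw [phiLetter_gen (N+1) (a+m, true) (by omega : i ≠ a + (m+1) ∧ 1 ≤ i ∧ i ≤ N + 1 ∧ _),
        if_pos rfl]
      unfold phiGenImg
      split_ifs <;> first | rfl | omega
    rw [tauWord_succ, phiWord_append_singleton_apply, hstep]
    exact ih (by omega) (by omega)

lemma phiWord_tauWord_genLast_of_not_mem {i : ℕ} (hm : a + m ≤ N) (hi : 1 ≤ i) (hiN : i ≤ N)
    (hout : i < a ∨ a + m < i) :
    phiWord (N+1) (tauWord a m) (genLast N i) = genLast N i := by
  induction m with
  | zero => rfl
  | succ m ih =>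
    rw [tauWord_succ, phiWord_append_singleton_apply]
    rw [phiLetter_genLast (by omega) hi hiN, if_neg (by omega), if_neg (by omega)]
    exact ih (by omega) (by omega)

lemma phiWord_tauWord_genLast_last (hm : a + m ≤ N) (ha : 1 ≤ a) :
    phiWord (N+1) (tauWord a m) (genLast N (a+m)) = genLast N a := by
  induction m with
  | zero => rfl
  | succ m ih =>
    rw [tauWord_succ, phiWord_append_singleton_apply]
    rw [phiLetter_genLast (by omega) (by omega) hm, if_neg (by omega), if_pos (by omega)]
    exact ih (by omega)

lemma phiWord_tauWord_genLast_of_lt {t : ℕ} (hm : a + m ≤ N) (ha : 1 ≤ a) (ht : t < m) :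
    phiWord (N+1) (tauWord a m) (genLast N (a+t)) =
      genLast N (a+t+1) - gen (N+1) (a+t+1) a * genLast N a := by
  induction m with
  | zero => omega
  | succ m ih =>
    rw [tauWord_succ, phiWord_append_singleton_apply]
    rw [phiLetter_genLast (by omega) (by omega) (by omega)]
    rcases Nat.lt_or_ge t m with htm | htm
    · rw [if_neg (by omega), if_neg (by omega)]
      exact ih (by omega) htm
    · obtain rfl : t = m := by omega
      rw [if_pos rfl, map_sub, map_mul, phiWord_tauWord_genLast_of_not_mem (by omega) (by omega)
        (by omega) (by omega), phiWord_tauWord_gen (by omega) (by omega) (by omega),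
        phiWord_tauWord_genLast_last (by omega) ha]

end tauWord

section kappaWord

variable {N a l p : ℕ}

lemma kappaWord_succ (a l p : ℕ) : kappaWord a (l+1) p = tauWord (a+l) p ++ kappaWord a l p := by
  simp [kappaWord, List.range_succ]

lemma wordIn_kappaWord (ha : 1 ≤ a) (hN : a + l + p ≤ N + 1) : WordIn N (kappaWord a l p) := by
  induction l with
  | zero => exact fun _ h => absurd h List.not_mem_nil
  | succ l ih =>
    rw [kappaWord_succ]
    intro x hx
    rcases List.mem_append.1 hx with hx | hx
    · exact wordIn_tauWord (by omega) (by omega) x hx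
    · exact ih (by omega) x hx

lemma phiWord_kappaWord_genLast_of_not_mem {i : ℕ} (hN : a + l + p ≤ N + 1) (hi : 1 ≤ i)
    (hiN : i ≤ N) (hout : i < a ∨ a + p + l ≤ i) :
    phiWord (N+1) (kappaWord a l p) (genLast N i) = genLast N i := by
  induction l with
  | zero => rfl
  | succ l ih =>
    rw [kappaWord_succ, phiWord_append, AlgHom.comp_apply, ih (by omega) (by omega)]
    exact phiWord_tauWord_genLast_of_not_mem (by omega) hi hiN (by omega)

lemma phiWord_kappaWord_genLast_shift {j : ℕ} (ha : 1 ≤ a) (hN : a + l + p ≤ N + 1) (hj : j < l) :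
    phiWord (N+1) (kappaWord a l p) (genLast N (a+p+j)) = genLast N (a+j) := by
  induction l with
  | zero => omega
  | succ l ih =>
    rw [kappaWord_succ, phiWord_append, AlgHom.comp_apply]
    rcases Nat.lt_or_ge j l with hjl | hjl
    · rw [ih (by omega) hjl]
      exact phiWord_tauWord_genLast_of_not_mem (by omega) (by omega) (by omega) (by omega)
    · obtain rfl : j = l := by omega
      rw [phiWord_kappaWord_genLast_of_not_mem (by omega) (by omega) (by omega) (by omega),
        show a + p + j = a + j + p by omega]
      exact phiWord_tauWord_genLast_last (by omega) (by omega)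

lemma phiWord_kappaWord_genLast_block {t : ℕ} (ha : 1 ≤ a) (hN : a + l + p ≤ N + 1) (ht : t < p) :
    ∃ c : ℕ → FA N, phiWord (N+1) (kappaWord a l p) (genLast N (a+t)) =
        genLast N (a+l+t) + ∑ u ∈ Finset.range l, incl N (c u) * genLast N (a+u) ∧
      (1 ≤ l → c (l-1) = -gen N (a+l+t) (a+l-1)) := by
  induction l with
  | zero => exact ⟨0, by rw [Finset.sum_range_zero, add_zero, add_zero]; rfl, by omega⟩
  | succ l ih =>
    obtain ⟨c, hc, -⟩ := ih (by omega)
    have hw : WordIn N (tauWord (a+l) p) := wordIn_tauWord (by omega) (by omega)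
    let c' : ℕ → FA N := fun u =>
      if u = l then -gen N (a+l+t+1) (a+l) else phiWord N (tauWord (a+l) p) (c u)
    have hfix : ∀ u ∈ Finset.range l, phiWord (N+1) (tauWord (a+l) p)
        (incl N (c u) * genLast N (a+u)) = incl N (c' u) * genLast N (a+u) := by
      intro u hu
      have hul := Finset.mem_range.1 hu
      rw [map_mul, phiWord_incl hw, show c' u = _ from if_neg hul.ne,
        phiWord_tauWord_genLast_of_not_mem (by omega) (by omega) (by omega) (by omega)]
    refine ⟨c', ?_, fun _ => by simp [c', show a + (l + 1) + t = a + l + t + 1 by omega]⟩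
    rw [kappaWord_succ, phiWord_append, AlgHom.comp_apply, hc, map_add, map_sum,
      Finset.sum_congr rfl hfix, phiWord_tauWord_genLast_of_lt (by omega) (by omega) ht,
      Finset.sum_range_succ, show c' l = -gen N (a+l+t+1) (a+l) from if_pos rfl,
      map_neg, incl_gen (by omega) (by omega), neg_mul,
      show a + (l + 1) + t = a + l + t + 1 by omega]
    abel

end kappaWord

section cable

variable {N p m : ℕ}

lemma cable_append (p : ℕ) (w₁ w₂ : List (ℕ × Bool)) :
    cable p (w₁ ++ w₂) = cable p w₁ ++ cable p w₂ := by
  simp [cable]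

lemma cable_tauWord_one_succ (p m : ℕ) :
    cable p (tauWord 1 (m+1)) = cable p (tauWord 1 m) ++ kappaWord (m*p+1) p p := by
  simp [tauWord_succ, cable, add_comm 1 m]

lemma wordIn_cable_tauWord_one (hN : m*p + p ≤ N) : WordIn N (cable p (tauWord 1 m)) := by
  induction m with
  | zero => exact fun _ h => absurd h List.not_mem_nil
  | succ m ih =>
    rw [Nat.succ_mul] at hN
    rw [cable_tauWord_one_succ]
    intro x hx
    rcases List.mem_append.1 hx with hx | hx
    · exact ih (by omega) x hx
    · exact wordIn_kappaWord (by omega) (by omega) x hx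

lemma phiWord_cable_tauWord_one_genLast_of_gt {i : ℕ} (hN : m*p + p ≤ N) (hi : m*p + p < i)
    (hiN : i ≤ N) :
    phiWord (N+1) (cable p (tauWord 1 m)) (genLast N i) = genLast N i := by
  induction m with
  | zero => rfl
  | succ m ih =>
    rw [Nat.succ_mul] at hN hi
    rw [cable_tauWord_one_succ, phiWord_append, AlgHom.comp_apply,
      phiWord_kappaWord_genLast_of_not_mem (by omega) (by omega) hiN (by omega)]
    exact ih (by omega) (by omega)

lemma phiWord_cable_tauWord_one_genLast_last {t : ℕ} (hN : m*p + p ≤ N) (ht : t < p) :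
    phiWord (N+1) (cable p (tauWord 1 m)) (genLast N (m*p+1+t)) = genLast N (1+t) := by
  induction m with
  | zero => simp only [zero_mul, zero_add]; rfl
  | succ m ih =>
    rw [Nat.succ_mul] at hN ⊢
    rw [cable_tauWord_one_succ, phiWord_append, AlgHom.comp_apply,
      show m*p + p + 1 + t = m*p + 1 + p + t by omega,
      phiWord_kappaWord_genLast_shift (by omega) (by omega) ht]
    exact ih (by omega)

lemma phiWord_cable_tauWord_one_genLast_block {b t : ℕ} (hN : m*p + p ≤ N) (hb : b < m)
    (ht : t < p) :
    ∃ c : ℕ → FA N, phiWord (N+1) (cable p (tauWord 1 m)) (genLast N (b*p+1+t)) =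
        genLast N ((b+1)*p+1+t) + ∑ u ∈ Finset.range p, incl N (c u) * genLast N (1+u) ∧
      (b = 0 → c (p-1) = -gen N (p+1+t) p) := by
  induction m with
  | zero => omega
  | succ m ih =>
    rw [Nat.succ_mul] at hN
    rw [cable_tauWord_one_succ, phiWord_append, AlgHom.comp_apply]
    rcases Nat.lt_or_ge b m with hbm | hbm
    · have hbp : b*p + p ≤ m*p := by simpa [Nat.succ_mul] using Nat.mul_le_mul_right p hbm
      rw [phiWord_kappaWord_genLast_of_not_mem (by omega) (by omega) (by omega) (by omega)]
      exact ih (by omega) hbm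
    · obtain rfl : b = m := by omega
      obtain ⟨c, hc, hlast⟩ := phiWord_kappaWord_genLast_block (N := N) (a := b*p+1) (l := p)
        (by omega) (by omega) ht
      have hw := wordIn_cable_tauWord_one (p := p) (m := b) (N := N) (by omega)
      refine ⟨fun u => phiWord N (cable p (tauWord 1 b)) (c u), ?_, ?_⟩
      · rw [hc, map_add, Nat.succ_mul, show b*p + 1 + p + t = b*p + p + 1 + t by omega,
          phiWord_cable_tauWord_one_genLast_of_gt (by omega) (by omega) (by omega), map_sum]
        refine congrArg _ (Finset.sum_congr rfl fun u hu => ?_)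
        rw [map_mul, phiWord_incl hw, phiWord_cable_tauWord_one_genLast_last (by omega)
          (Finset.mem_range.1 hu)]
      · rintro rfl
        change c (p-1) = _
        rw [hlast (by omega), show 0*p + 1 + p + t = p + 1 + t by omega,
          show 0*p + 1 + p - 1 = p by omega]

end cable

section leftCoeff

variable {N : ℕ}

/-- Products of two `a_{j,N+1}` vanish in this square-zero extension, so the left coefficients of
a combination `∑ x_j a_{j,N+1}` can be read off from the second component. -/
noncomputable def splitLast (N : ℕ) : FA (N+1) →ₐ[ℤ] TrivSqZeroExt (FA N) (ℕ → FA N) :=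
  FreeAlgebra.lift ℤ fun g : Idx (N+1) =>
    if g.val.2 = N+1 then TrivSqZeroExt.inr (Pi.single g.val.1 1)
    else if g.val.1 = N+1 then 0
    else TrivSqZeroExt.inl (gen N g.val.1 g.val.2)

lemma splitLast_genLast {k : ℕ} (hk : 1 ≤ k) (hkN : k ≤ N) :
    splitLast N (genLast N k) = TrivSqZeroExt.inr (Pi.single k 1) := by
  rw [genLast, gen_eq_ι (by omega : k ≠ N + 1 ∧ 1 ≤ k ∧ k ≤ N + 1 ∧ _), splitLast,
    FreeAlgebra.lift_ι_apply, if_pos rfl]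

lemma splitLast_incl (x : FA N) : splitLast N (incl N x) = TrivSqZeroExt.inl x := by
  suffices (splitLast N).comp (incl N) = (TrivSqZeroExt.inlHom (FA N) (ℕ → FA N)).toIntAlgHom from
    congrArg (· x) this
  refine FreeAlgebra.hom_ext (funext fun g => ?_)
  obtain ⟨⟨i, j⟩, h⟩ := g
  change i ≠ j ∧ 1 ≤ i ∧ i ≤ N ∧ 1 ≤ j ∧ j ≤ N at h
  change splitLast N (incl N (FreeAlgebra.ι ℤ _)) = TrivSqZeroExt.inl (FreeAlgebra.ι ℤ _)
  rw [← gen_eq_ι h, incl_gen h.2.2.1 h.2.2.2.2,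
    gen_eq_ι (by omega : i ≠ j ∧ 1 ≤ i ∧ i ≤ N + 1 ∧ 1 ≤ j ∧ j ≤ N + 1), splitLast,
    FreeAlgebra.lift_ι_apply]
  dsimp only
  rw [if_neg (by omega), if_neg (by omega)]

noncomputable def leftCoeff (N j : ℕ) : FA (N+1) →ₗ[ℤ] FA N :=
  ((LinearMap.proj j ∘ₗ TrivSqZeroExt.sndHom (FA N) (ℕ → FA N)).restrictScalars ℤ) ∘ₗ
    (splitLast N).toLinearMap

lemma leftCoeff_incl_mul_genLast (j : ℕ) {k : ℕ} (hk : 1 ≤ k) (hkN : k ≤ N) (x : FA N) :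
    leftCoeff N j (incl N x * genLast N k) = if j = k then x else 0 := by
  change (splitLast N (incl N x * genLast N k)).snd j = _
  rw [map_mul, splitLast_incl, splitLast_genLast hk hkN, TrivSqZeroExt.inl_mul_inr,
    TrivSqZeroExt.snd_inr, Pi.smul_apply, Pi.single_apply, smul_eq_mul]
  split_ifs <;> simp

lemma leftCoeff_genLast (j : ℕ) {k : ℕ} (hk : 1 ≤ k) (hkN : k ≤ N) :
    leftCoeff N j (genLast N k) = if j = k then 1 else 0 := by
  simpa using leftCoeff_incl_mul_genLast j hk hkN 1

end leftCoeff

lemma Nat.mul_add_inj_of_mem_Icc {p b c s t : ℕ} (hs : s ∈ Finset.Icc 1 p)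
    (ht : t ∈ Finset.Icc 1 p) (h : b*p + s = c*p + t) : b = c ∧ s = t := by
  simp only [Finset.mem_Icc] at hs ht
  rcases lt_trichotomy b c with hbc | rfl | hbc
  · have := Nat.mul_le_mul_right p (Nat.succ_le_of_lt hbc)
    rw [Nat.succ_mul] at this
    omega
  · omega
  · have := Nat.mul_le_mul_right p (Nat.succ_le_of_lt hbc)
    rw [Nat.succ_mul] at this
    omega

lemma Nat.sub_one_mul_add_self {c : ℕ} (hc : 1 ≤ c) (p : ℕ) : (c-1)*p + p = c*p := by
  rw [← Nat.succ_mul, Nat.succ_eq_add_one, Nat.sub_add_cancel hc]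

namespace IsPhiL

section

variable {N : ℕ} {w : List (ℕ × Bool)} {M : ℕ → ℕ → FA N} {i j k : ℕ}

lemma apply_eq_leftCoeff (hM : IsPhiL N w M) (hi : i ∈ Finset.Icc 1 N)
    (hj : j ∈ Finset.Icc 1 N) :
    M i j = leftCoeff N j (phiWord (N+1) w (genLast N i)) := by
  have hrow : phiWord (N+1) w (genLast N i) =
      ∑ k ∈ Finset.Icc 1 N, incl N (M i k) * genLast N k := hM.2 i hi
  rw [hrow, map_sum, Finset.sum_congr rfl fun k hk =>
    leftCoeff_incl_mul_genLast j (Finset.mem_Icc.1 hk).1 (Finset.mem_Icc.1 hk).2 (M i k),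
    Finset.sum_ite_eq, if_pos hj]

lemma apply_eq_of_phiWord_genLast_eq (hM : IsPhiL N w M) (hi : i ∈ Finset.Icc 1 N)
    (hk : k ∈ Finset.Icc 1 N) (h : phiWord (N+1) w (genLast N i) = genLast N k)
    (hj : j ∈ Finset.Icc 1 N) :
    M i j = if j = k then 1 else 0 := by
  rw [hM.apply_eq_leftCoeff hi hj, h,
    leftCoeff_genLast j (Finset.mem_Icc.1 hk).1 (Finset.mem_Icc.1 hk).2]

lemma apply_eq_of_phiWord_genLast_eq_add_sum {p : ℕ} {c : ℕ → FA N} (hM : IsPhiL N w M)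
    (hi : i ∈ Finset.Icc 1 N) (hk : k ∈ Finset.Icc 1 N) (hpN : p ≤ N)
    (h : phiWord (N+1) w (genLast N i) =
      genLast N k + ∑ u ∈ Finset.range p, incl N (c u) * genLast N (1+u))
    (hj : j ∈ Finset.Icc 1 N) :
    M i j = (if j = k then 1 else 0) + if j ≤ p then c (j-1) else 0 := by
  obtain ⟨hj1, -⟩ := Finset.mem_Icc.1 hj
  rw [hM.apply_eq_leftCoeff hi hj, h, map_add, map_sum,
    leftCoeff_genLast j (Finset.mem_Icc.1 hk).1 (Finset.mem_Icc.1 hk).2,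
    Finset.sum_congr rfl fun u hu =>
      leftCoeff_incl_mul_genLast j (by omega) (by have := Finset.mem_range.1 hu; omega) (c u)]
  congr 1
  split_ifs with hjp
  · rw [Finset.sum_eq_single (j-1) (fun u _ hu => if_neg (by omega))
      (fun h => absurd (Finset.mem_range.2 (by omega)) h), if_pos (by omega)]
  · exact Finset.sum_eq_zero fun u hu => if_neg (by have := Finset.mem_range.1 hu; omega)

lemma apply_tauWord_last {a m : ℕ} (hM : IsPhiL N (tauWord a m) M)
    (ha : 1 ≤ a) (hm : a + m ≤ N) (hj : j ∈ Finset.Icc 1 N) :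
    M (a+m) j = if j = a then 1 else 0 :=
  hM.apply_eq_of_phiWord_genLast_eq (Finset.mem_Icc.2 ⟨by omega, hm⟩)
    (Finset.mem_Icc.2 ⟨ha, by omega⟩) (phiWord_tauWord_genLast_last hm ha) hj

end

section

variable {n p : ℕ} {M : ℕ → ℕ → FA (n*p)} {b c s t : ℕ}

lemma apply_cable_tauWord_block (hM : IsPhiL (n*p) (cable p (tauWord 1 (n-1))) M)
    (hb : 1 ≤ b) (hbn : b + 1 ≤ n) (hc : 2 ≤ c) (hcn : c ≤ n)
    (hs : s ∈ Finset.Icc 1 p) (ht : t ∈ Finset.Icc 1 p) :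
    M ((b-1)*p + s) ((c-1)*p + t) = if c = b + 1 ∧ s = t then 1 else 0 := by
  obtain ⟨hs1, hsp⟩ := Finset.mem_Icc.1 hs
  obtain ⟨ht1, htp⟩ := Finset.mem_Icc.1 ht
  have hn1 := Nat.sub_one_mul_add_self (by omega : 1 ≤ n) p
  have hb1 := Nat.sub_one_mul_add_self hb p
  have hc1 := Nat.sub_one_mul_add_self (by omega : 1 ≤ c) p
  have hbn' : b*p + p ≤ n*p := by simpa [Nat.succ_mul] using Nat.mul_le_mul_right p hbn
  have hcn' : c*p ≤ n*p := Nat.mul_le_mul_right p hcn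
  have hpc : p ≤ (c-1)*p := Nat.le_mul_of_pos_left p (by omega)
  obtain ⟨d, hd, -⟩ := phiWord_cable_tauWord_one_genLast_block (N := n*p) (p := p) (m := n-1)
    (b := b-1) (t := s-1) (by omega) (by omega) (by omega)
  rw [show (b-1)*p + 1 + (s-1) = (b-1)*p + s by omega, Nat.sub_add_cancel hb,
    show b*p + 1 + (s-1) = b*p + s by omega] at hd
  rw [hM.apply_eq_of_phiWord_genLast_eq_add_sum (Finset.mem_Icc.2 ⟨by omega, by omega⟩)
    (Finset.mem_Icc.2 ⟨by omega, by omega⟩) (by omega) hd (Finset.mem_Icc.2 ⟨by omega, by omega⟩),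
    if_neg (show ¬ (c-1)*p + t ≤ p by omega), add_zero]
  refine if_congr ⟨fun h => ?_, fun ⟨hcb, hst⟩ => ?_⟩ rfl rfl
  · obtain ⟨hcb, hst⟩ := Nat.mul_add_inj_of_mem_Icc ht hs h
    omega
  · subst hcb hst
    rfl

lemma apply_cable_tauWord_last_block (hM : IsPhiL (n*p) (cable p (tauWord 1 (n-1))) M)
    (hn : 1 ≤ n) (hc : 1 ≤ c) (hcn : c ≤ n) (hs : s ∈ Finset.Icc 1 p) (ht : t ∈ Finset.Icc 1 p) :
    M ((n-1)*p + s) ((c-1)*p + t) = if c = 1 ∧ s = t then 1 else 0 := by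
  obtain ⟨hs1, hsp⟩ := Finset.mem_Icc.1 hs
  obtain ⟨ht1, htp⟩ := Finset.mem_Icc.1 ht
  have hn1 := Nat.sub_one_mul_add_self hn p
  have hc1 := Nat.sub_one_mul_add_self hc p
  have hcn' : c*p ≤ n*p := Nat.mul_le_mul_right p hcn
  have hd := phiWord_cable_tauWord_one_genLast_last (N := n*p) (p := p) (m := n-1) (t := s-1)
    (by omega) (by omega)
  rw [show (n-1)*p + 1 + (s-1) = (n-1)*p + s by omega, show 1 + (s-1) = s by omega] at hd
  rw [hM.apply_eq_of_phiWord_genLast_eq (Finset.mem_Icc.2 ⟨by omega, by omega⟩)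
    (Finset.mem_Icc.2 ⟨by omega, by omega⟩) hd (Finset.mem_Icc.2 ⟨by omega, by omega⟩)]
  refine if_congr ⟨fun h => ?_, fun ⟨hc, hst⟩ => ?_⟩ rfl rfl
  · obtain ⟨hc0, hts⟩ := Nat.mul_add_inj_of_mem_Icc (b := c-1) (c := 0) ht hs (by omega)
    omega
  · subst hc hst
    simp

lemma apply_cable_tauWord_one_p (hM : IsPhiL (n*p) (cable p (tauWord 1 (n-1))) M)
    (hn : 2 ≤ n) (hp : 1 ≤ p) :
    M 1 p = -gen (n*p) (p+1) p := by
  have h2p : 2*p ≤ n*p := Nat.mul_le_mul_right p hn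
  have hn1 := Nat.sub_one_mul_add_self (by omega : 1 ≤ n) p
  obtain ⟨d, hd, hlast⟩ := phiWord_cable_tauWord_one_genLast_block (N := n*p) (p := p)
    (m := n-1) (b := 0) (t := 0) (by omega) (by omega) (by omega)
  simp only [zero_mul, zero_add, add_zero, one_mul] at hd hlast
  rw [hM.apply_eq_of_phiWord_genLast_eq_add_sum (Finset.mem_Icc.2 ⟨le_rfl, by omega⟩)
    (Finset.mem_Icc.2 ⟨by omega, by omega⟩) (by omega) hd (Finset.mem_Icc.2 ⟨hp, by omega⟩),
    if_neg (by omega), if_pos le_rfl, zero_add, hlast trivial]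

end

end IsPhiL

/-- The `p × p` blocks `Ψ_{ij}` of `Φ^L_{τ^{(p)}}` for `τ = σ_1⋯σ_{n−1}`:
(a) `Ψ_{i,i+1} = I_p` for `i < n` and `Ψ_{ij} = 0` for `i < n`, `j > 1`, `j ≠ i+1`;
(b) `Ψ_{n1} = I_p`; (c) `Ψ_{nj} = 0` for `j > 1`; the `(1,p)` entry of `Ψ_{11}` is `−a_{p+1,p}`;
and (d) the `p`-th row of `Φ^L_{γ̄}` for `γ̄ = σ_1⋯σ_{p−1}` is `e_1`. -/
theorem blocks_of_PhiL_cabled_tau (n p : ℕ) (hn : 2 ≤ n) (hp : 2 ≤ p)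
    (M : ℕ → ℕ → FA (n*p)) (hM : IsPhiL (n*p) (cable p (tauWord 1 (n-1))) M)
    (M' : ℕ → ℕ → FA (n*p)) (hM' : IsPhiL (n*p) (tauWord 1 (p-1)) M') :
    (∀ i, 1 ≤ i → i + 1 ≤ n → ∀ s ∈ Finset.Icc 1 p, ∀ t ∈ Finset.Icc 1 p,
        M ((i-1)*p + s) (i*p + t) = if s = t then 1 else 0) ∧
    (∀ i j, 1 ≤ i → i + 1 ≤ n → 2 ≤ j → j ≤ n → j ≠ i + 1 →
        ∀ s ∈ Finset.Icc 1 p, ∀ t ∈ Finset.Icc 1 p, M ((i-1)*p + s) ((j-1)*p + t) = 0) ∧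
    (∀ s ∈ Finset.Icc 1 p, ∀ t ∈ Finset.Icc 1 p,
        M ((n-1)*p + s) t = if s = t then 1 else 0) ∧
    (∀ j, 2 ≤ j → j ≤ n → ∀ s ∈ Finset.Icc 1 p, ∀ t ∈ Finset.Icc 1 p,
        M ((n-1)*p + s) ((j-1)*p + t) = 0) ∧
    (M 1 p = -gen (n*p) (p+1) p) ∧
    (M' p 1 = 1 ∧ ∀ j, 2 ≤ j → j ≤ n*p → M' p j = 0) := by
  have hpN : p ≤ n*p := Nat.le_mul_of_pos_left p (by omega)
  have hM'p : ∀ j ∈ Finset.Icc 1 (n*p), M' p j = if j = 1 then 1 else 0 := fun j hj => by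
    simpa [show 1 + (p-1) = p by omega] using hM'.apply_tauWord_last le_rfl (by omega) hj
  refine ⟨fun i hi hin s hs t ht => ?_, fun i j hi hin hj hjn hji s hs t ht => ?_,
    fun s hs t ht => ?_, fun j hj hjn s hs t ht => ?_, hM.apply_cable_tauWord_one_p hn (by omega),
    ?_, fun j hj hjn => ?_⟩
  · simpa using hM.apply_cable_tauWord_block (c := i+1) hi hin (by omega) hin hs ht
  · rw [hM.apply_cable_tauWord_block hi hin hj hjn hs ht, if_neg (by omega)]
  · simpa using hM.apply_cable_tauWord_last_block (c := 1) (by omega) le_rfl (by omega) hs ht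
  · rw [hM.apply_cable_tauWord_last_block (by omega) (by omega) hjn hs ht, if_neg (by omega)]
  · rw [hM'p 1 (Finset.mem_Icc.2 ⟨le_rfl, by omega⟩), if_pos rfl]
  · rw [hM'p j (Finset.mem_Icc.2 ⟨by omega, hjn⟩), if_neg (by omega)]
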